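/- Let ∥·∥ denote the Frobenius norm normalized so that ∥I∥² = 1 (i.e., ∥A∥² = tr(AAᵀ)/p for p×p matrices), and ⟨A,B⟩ = tr(ABᵀ)/p the corresponding inner product. Let Σ be a fixed symmetric p×p matrix, S a random symmetric p×p matrix with E∥S∥² < ∞, μ = ⟨Σ, I⟩, α² = ∥Σ − μI∥², β² = E∥S − Σ∥², δ² = E∥S − μI∥². Assume E[S] = Σ. Then δ² = α² + β², and the minimizer over nonrandom scalars ρ₁, ρ₂ of E∥ρ₁I + ρ₂S − Σ∥² is attained at ρ₂ = α²/δ², ρ₁ = (β²/δ²)μ, with minimal value α²β²/δ². -/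

import Mathlib

open Matrix MeasureTheory ProbabilityTheory

/-- Normalized Frobenius inner product ⟨A,B⟩ = tr(ABᵀ)/p, so that ⟨I,I⟩ = 1. -/
noncomputable def frobInner {p : ℕ} (A B : Matrix (Fin p) (Fin p) ℝ) : ℝ :=
  (A * Bᵀ).trace / p

/-- Normalized squared Frobenius norm ∥A∥² = tr(AAᵀ)/p. -/
noncomputable def frobNormSq {p : ℕ} (A : Matrix (Fin p) (Fin p) ℝ) : ℝ :=
  frobInner A A

/-!
Write `ρ₁ I + ρ₂ S - Σ = (ρ₁ + (ρ₂ - 1) μ) I + (ρ₂ - 1) (Σ - μ I) + ρ₂ (S - Σ)`. The three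
summands are orthogonal: `Σ - μ I` is traceless, and `S - Σ` has mean zero, so its cross terms
with nonrandom matrices vanish in expectation. Hence the risk is the quadratic
`(ρ₁ + (ρ₂ - 1) μ)² + (ρ₂ - 1)² α² + ρ₂² β²`, and the special case `S - μ I` gives `δ² = α² + β²`.
The quadratic is minimized by `ρ₂ = α² / δ²` and `ρ₁ = (1 - ρ₂) μ`.
-/

section Frobenius

variable {p : ℕ}

theorem frobInner_eq_sum (A B : Matrix (Fin p) (Fin p) ℝ) :
    frobInner A B = (∑ i, ∑ j, A i j * B i j) / p := by
  simp [frobInner, Matrix.trace, Matrix.mul_apply]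

theorem frobNormSq_eq_sum (A : Matrix (Fin p) (Fin p) ℝ) :
    frobNormSq A = (∑ i, ∑ j, A i j ^ 2) / p := by
  simp [frobNormSq, frobInner_eq_sum, sq]

theorem frobNormSq_nonneg (A : Matrix (Fin p) (Fin p) ℝ) : 0 ≤ frobNormSq A := by
  rw [frobNormSq_eq_sum]
  positivity

theorem frobInner_comm (A B : Matrix (Fin p) (Fin p) ℝ) : frobInner A B = frobInner B A := by
  simp only [frobInner_eq_sum, mul_comm (A _ _)]

theorem frobInner_smul_right (c : ℝ) (A B : Matrix (Fin p) (Fin p) ℝ) :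
    frobInner A (c • B) = c * frobInner A B := by
  simp only [frobInner_eq_sum, Matrix.smul_apply, smul_eq_mul, mul_left_comm _ c, ← Finset.mul_sum,
    mul_div_assoc]

theorem frobInner_smul_left (c : ℝ) (A B : Matrix (Fin p) (Fin p) ℝ) :
    frobInner (c • A) B = c * frobInner A B := by
  rw [frobInner_comm, frobInner_smul_right, frobInner_comm]

theorem frobNormSq_smul (c : ℝ) (A : Matrix (Fin p) (Fin p) ℝ) :
    frobNormSq (c • A) = c ^ 2 * frobNormSq A := by
  rw [frobNormSq, frobInner_smul_left, frobInner_smul_right, frobNormSq]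
  ring

theorem frobNormSq_add (A B : Matrix (Fin p) (Fin p) ℝ) :
    frobNormSq (A + B) = frobNormSq A + 2 * frobInner A B + frobNormSq B := by
  simp only [frobNormSq_eq_sum, frobInner_eq_sum, Matrix.add_apply, add_sq, Finset.sum_add_distrib,
    mul_assoc, ← Finset.mul_sum, add_div, mul_div_assoc]

theorem frobInner_one_left (B : Matrix (Fin p) (Fin p) ℝ) : frobInner 1 B = B.trace / p := by
  simp [frobInner, trace_transpose]

theorem frobInner_one_right (A : Matrix (Fin p) (Fin p) ℝ) : frobInner A 1 = A.trace / p := by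
  simp [frobInner]

theorem frobNormSq_one (hp : 0 < p) : frobNormSq (1 : Matrix (Fin p) (Fin p) ℝ) = 1 := by
  rw [frobNormSq, frobInner_one_left, trace_one, Fintype.card_fin]
  exact div_self (by positivity)

theorem frobInner_one_sub_smul_one (hp : 0 < p) (A : Matrix (Fin p) (Fin p) ℝ) :
    frobInner 1 (A - frobInner A 1 • 1) = 0 := by
  rw [frobInner_one_left, trace_sub, trace_smul, trace_one, Fintype.card_fin,
    frobInner_one_right, smul_eq_mul, div_mul_cancel₀ _ (by positivity), sub_self, zero_div]

theorem frobNormSq_smul_one_add_smul_sub_smul_one (hp : 0 < p)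
    (A : Matrix (Fin p) (Fin p) ℝ) (c d : ℝ) :
    frobNormSq (c • 1 + d • (A - frobInner A 1 • 1)) =
      c ^ 2 + d ^ 2 * frobNormSq (A - frobInner A 1 • 1) := by
  rw [frobNormSq_add, frobNormSq_smul, frobNormSq_smul, frobInner_smul_left,
    frobInner_smul_right, frobInner_one_sub_smul_one hp, frobNormSq_one hp]
  ring

end Frobenius

section RandomMatrix

variable {Ω : Type*} [MeasurableSpace Ω] {P : Measure Ω} {p : ℕ}

theorem integral_frobInner_right {T : Ω → Matrix (Fin p) (Fin p) ℝ}
    (hT : ∀ i j, Integrable (fun ω => T ω i j) P) (A : Matrix (Fin p) (Fin p) ℝ) :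
    ∫ ω, frobInner A (T ω) ∂P = frobInner A (of fun i j => ∫ ω, T ω i j ∂P) := by
  simp only [frobInner_eq_sum, of_apply]
  rw [integral_div, integral_finsetSum (f := fun i ω => ∑ j, A i j * T ω i j) _ fun i _ =>
    integrable_finsetSum _ fun j _ => (hT i j).const_mul _]
  congr 1
  refine Finset.sum_congr rfl fun i _ => ?_
  rw [integral_finsetSum _ fun j _ => (hT i j).const_mul _]
  simp only [integral_const_mul]

theorem integrable_frobInner_right {T : Ω → Matrix (Fin p) (Fin p) ℝ}
    (hT : ∀ i j, Integrable (fun ω => T ω i j) P) (A : Matrix (Fin p) (Fin p) ℝ) :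
    Integrable (fun ω => frobInner A (T ω)) P := by
  simp only [frobInner_eq_sum]
  exact (integrable_finsetSum _ fun i _ => integrable_finsetSum _ fun j _ =>
    (hT i j).const_mul _).div_const _

theorem integrable_frobNormSq {T : Ω → Matrix (Fin p) (Fin p) ℝ}
    (hT : ∀ i j, MemLp (fun ω => T ω i j) 2 P) :
    Integrable (fun ω => frobNormSq (T ω)) P := by
  simp only [frobNormSq_eq_sum]
  exact (integrable_finsetSum _ fun i _ => integrable_finsetSum _ fun j _ =>
    (hT i j).integrable_sq).div_const _

theorem integral_frobNormSq_const_add [IsProbabilityMeasure P]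
    {T : Ω → Matrix (Fin p) (Fin p) ℝ} (hT : ∀ i j, MemLp (fun ω => T ω i j) 2 P)
    (hT₀ : ∀ i j, ∫ ω, T ω i j ∂P = 0) (A : Matrix (Fin p) (Fin p) ℝ) :
    ∫ ω, frobNormSq (A + T ω) ∂P = frobNormSq A + ∫ ω, frobNormSq (T ω) ∂P := by
  have hT₁ : ∀ i j, Integrable (fun ω => T ω i j) P := fun i j => (hT i j).integrable one_le_two
  have hcross : ∫ ω, frobInner A (T ω) ∂P = 0 := by
    rw [integral_frobInner_right hT₁, frobInner_eq_sum]
    simp [hT₀]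
  have hcross₂ : Integrable (fun ω => 2 * frobInner A (T ω)) P :=
    (integrable_frobInner_right hT₁ A).const_mul 2
  have hlin : Integrable (fun ω => frobNormSq A + 2 * frobInner A (T ω)) P :=
    (integrable_const _).add hcross₂
  simp only [frobNormSq_add]
  rw [integral_add hlin (integrable_frobNormSq hT), integral_add (integrable_const _) hcross₂,
    integral_const_mul, hcross]
  simp

end RandomMatrix

section Shrinkage

variable {Ω : Type*} [MeasurableSpace Ω] {P : Measure Ω} [IsProbabilityMeasure P] {p : ℕ}

theorem integral_frobNormSq_add_smul_sub_mean {S : Ω → Matrix (Fin p) (Fin p) ℝ}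
    {Sig : Matrix (Fin p) (Fin p) ℝ} (hS : ∀ i j, MemLp (fun ω => S ω i j) 2 P)
    (hmean : ∀ i j, ∫ ω, S ω i j ∂P = Sig i j) (A : Matrix (Fin p) (Fin p) ℝ) (c : ℝ) :
    ∫ ω, frobNormSq (A + c • (S ω - Sig)) ∂P =
      frobNormSq A + c ^ 2 * ∫ ω, frobNormSq (S ω - Sig) ∂P := by
  have hT : ∀ i j, MemLp (fun ω => (c • (S ω - Sig)) i j) 2 P := fun i j =>
    ((hS i j).sub (memLp_const (Sig i j))).const_mul c
  have hT₀ : ∀ i j, ∫ ω, (c • (S ω - Sig)) i j ∂P = 0 := fun i j => by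
    simp only [Matrix.smul_apply, Matrix.sub_apply, smul_eq_mul]
    rw [integral_const_mul, integral_sub ((hS i j).integrable one_le_two) (integrable_const _),
      hmean, integral_const]
    simp
  rw [integral_frobNormSq_const_add hT hT₀]
  simp only [frobNormSq_smul, integral_const_mul]

theorem integral_frobNormSq_smul_one_add_smul_sub (hp : 0 < p)
    {S : Ω → Matrix (Fin p) (Fin p) ℝ} {Sig : Matrix (Fin p) (Fin p) ℝ}
    (hS : ∀ i j, MemLp (fun ω => S ω i j) 2 P) (hmean : ∀ i j, ∫ ω, S ω i j ∂P = Sig i j)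
    (ρ₁ ρ₂ : ℝ) :
    ∫ ω, frobNormSq (ρ₁ • 1 + ρ₂ • S ω - Sig) ∂P =
      (ρ₁ + (ρ₂ - 1) * frobInner Sig 1) ^ 2
        + (ρ₂ - 1) ^ 2 * frobNormSq (Sig - frobInner Sig 1 • 1)
        + ρ₂ ^ 2 * ∫ ω, frobNormSq (S ω - Sig) ∂P := by
  have hsplit : ∀ ω, ρ₁ • (1 : Matrix (Fin p) (Fin p) ℝ) + ρ₂ • S ω - Sig =
      ((ρ₁ + (ρ₂ - 1) * frobInner Sig 1) • 1 + (ρ₂ - 1) • (Sig - frobInner Sig 1 • 1))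
        + ρ₂ • (S ω - Sig) := fun ω => by module
  simp only [hsplit]
  rw [integral_frobNormSq_add_smul_sub_mean hS hmean,
    frobNormSq_smul_one_add_smul_sub_smul_one hp]

theorem integral_frobNormSq_sub_smul_one {S : Ω → Matrix (Fin p) (Fin p) ℝ}
    {Sig : Matrix (Fin p) (Fin p) ℝ} (hS : ∀ i j, MemLp (fun ω => S ω i j) 2 P)
    (hmean : ∀ i j, ∫ ω, S ω i j ∂P = Sig i j) (μ : ℝ) :
    ∫ ω, frobNormSq (S ω - μ • 1) ∂P =
      frobNormSq (Sig - μ • 1) + ∫ ω, frobNormSq (S ω - Sig) ∂P := by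
  have hsplit : ∀ ω, S ω - μ • 1 = (Sig - μ • 1) + (1 : ℝ) • (S ω - Sig) := fun ω => by module
  simp only [hsplit]
  rw [integral_frobNormSq_add_smul_sub_mean hS hmean, one_pow, one_mul]

end Shrinkage

theorem mul_div_add_le_quadratic {a b : ℝ} (ha : 0 ≤ a) (hb : 0 ≤ b) (x y : ℝ) :
    a * b / (a + b) ≤ x ^ 2 + (y - 1) ^ 2 * a + y ^ 2 * b := by
  rcases (add_nonneg ha hb).eq_or_lt with hab | hab
  · rw [← hab, div_zero]
    positivity
  rw [div_le_iff₀ hab]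
  nlinarith [sq_nonneg ((1 - y) * a - y * b), mul_nonneg (sq_nonneg x) hab.le]

theorem ledoit_wolf_optimal_shrinkage_general
    {Ω : Type*} [MeasureSpace Ω] [IsProbabilityMeasure (ℙ : Measure Ω)]
    {p : ℕ} (hp : 0 < p) (Sig : Matrix (Fin p) (Fin p) ℝ)
    (S : Ω → Matrix (Fin p) (Fin p) ℝ)
    (hSL2 : ∀ i j, MemLp (fun ω => S ω i j) 2 ℙ)
    (hmean : ∀ i j, (∫ ω, S ω i j) = Sig i j) :
    let μ : ℝ := frobInner Sig 1
    let α2 : ℝ := frobNormSq (Sig - μ • 1)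
    let β2 : ℝ := ∫ ω, frobNormSq (S ω - Sig)
    let δ2 : ℝ := ∫ ω, frobNormSq (S ω - μ • 1)
    δ2 ≠ 0 →
    (δ2 = α2 + β2 ∧
     (∀ ρ₁ ρ₂ : ℝ,
        α2 * β2 / δ2 ≤ ∫ ω, frobNormSq (ρ₁ • 1 + ρ₂ • S ω - Sig)) ∧
     (∫ ω, frobNormSq ((β2 / δ2 * μ) • 1 + (α2 / δ2) • S ω - Sig)) = α2 * β2 / δ2) := by
  intro μ α2 β2 δ2 hδ
  have hrisk : ∀ ρ₁ ρ₂ : ℝ, ∫ ω, frobNormSq (ρ₁ • 1 + ρ₂ • S ω - Sig) =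
      (ρ₁ + (ρ₂ - 1) * μ) ^ 2 + (ρ₂ - 1) ^ 2 * α2 + ρ₂ ^ 2 * β2 :=
    integral_frobNormSq_smul_one_add_smul_sub hp hSL2 hmean
  have hδα : δ2 = α2 + β2 := integral_frobNormSq_sub_smul_one hSL2 hmean μ
  have hα : 0 ≤ α2 := frobNormSq_nonneg _
  have hβ : 0 ≤ β2 := integral_nonneg fun ω => frobNormSq_nonneg _
  clear_value μ α2 β2 δ2
  subst hδα
  refine ⟨rfl, fun ρ₁ ρ₂ => hrisk ρ₁ ρ₂ ▸ mul_div_add_le_quadratic hα hβ _ _, ?_⟩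
  rw [hrisk]
  field_simp
  ring

/-- Ledoit–Wolf optimal linear shrinkage: with μ = ⟨Σ,I⟩, α² = ∥Σ−μI∥², β² = E∥S−Σ∥²,
δ² = E∥S−μI∥², one has δ² = α² + β², and E∥ρ₁I + ρ₂S − Σ∥² is minimized at
ρ₂ = α²/δ², ρ₁ = (β²/δ²)μ with minimal value α²β²/δ². -/
theorem ledoit_wolf_optimal_shrinkage
    {Ω : Type*} [MeasureSpace Ω] [IsProbabilityMeasure (ℙ : Measure Ω)]
    {p : ℕ} (hp : 0 < p) (Sig : Matrix (Fin p) (Fin p) ℝ) (hSig : Sig.IsSymm)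
    (S : Ω → Matrix (Fin p) (Fin p) ℝ) (hSsymm : ∀ ω, (S ω).IsSymm)
    (hSL2 : ∀ i j, MemLp (fun ω => S ω i j) 2 ℙ)
    (hmean : ∀ i j, (∫ ω, S ω i j) = Sig i j) :
    let μ : ℝ := frobInner Sig 1
    let α2 : ℝ := frobNormSq (Sig - μ • 1)
    let β2 : ℝ := ∫ ω, frobNormSq (S ω - Sig)
    let δ2 : ℝ := ∫ ω, frobNormSq (S ω - μ • 1)
    δ2 ≠ 0 →
    (δ2 = α2 + β2 ∧
     (∀ ρ₁ ρ₂ : ℝ,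
        α2 * β2 / δ2 ≤ ∫ ω, frobNormSq (ρ₁ • 1 + ρ₂ • S ω - Sig)) ∧
     (∫ ω, frobNormSq ((β2 / δ2 * μ) • 1 + (α2 / δ2) • S ω - Sig)) = α2 * β2 / δ2) :=
  ledoit_wolf_optimal_shrinkage_general hp Sig S hSL2 hmean
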